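/- arXiv:math/9702202 — 3 statements merged into one kernel-verified Lean document; each statement's English description precedes it below -/
import Mathlib

section
/- There is a constant M (depending only on the generating set) such that for every n, if (f,0) ∈ Z[1/p] ⊂ G lies in the ball B(n) of the Cayley graph of G = Z[1/p] ⋊ Z with respect to a finite generating set C, then |f| ≤ M·|p|^{nc/2} and denom(f) ≤ M·|p|^{nc/2}, where c = max{|c_i| : (f_i,c_i) ∈ C}. -/
namespace BS

/-- `Zp p` is the set of `p`-adic fractions `m / p^n` inside `ℚ`, i.e. `ℤ[1/p]`. -/
def Zp (p : ℤ) : Set ℚ := {q | ∃ (m : ℤ) (n : ℕ), q = (m : ℚ) / (p : ℚ) ^ n}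

lemma zero_mem (p : ℤ) : (0 : ℚ) ∈ Zp p := ⟨0, 0, by norm_num⟩

lemma one_mem (p : ℤ) : (1 : ℚ) ∈ Zp p := ⟨1, 0, by norm_num⟩

lemma cast_ne_zero {p : ℤ} (h : 1 < |p|) : (p : ℚ) ≠ 0 := by
  have hp : p ≠ 0 := by rintro rfl; simp at h
  exact_mod_cast hp

lemma neg_mem {p : ℤ} {q : ℚ} (hq : q ∈ Zp p) : -q ∈ Zp p := by
  obtain ⟨m, n, rfl⟩ := hq
  exact ⟨-m, n, by push_cast; ring⟩

lemma add_mem {p : ℤ} (hp : (p : ℚ) ≠ 0) {q r : ℚ} (hq : q ∈ Zp p) (hr : r ∈ Zp p) :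
    q + r ∈ Zp p := by
  obtain ⟨m1, n1, rfl⟩ := hq
  obtain ⟨m2, n2, rfl⟩ := hr
  refine ⟨m1 * p ^ n2 + m2 * p ^ n1, n1 + n2, ?_⟩
  push_cast
  field_simp
  rw [pow_add]; ring

lemma zpow_mul_mem {p : ℤ} (hp : (p : ℚ) ≠ 0) (e : ℤ) {q : ℚ} (hq : q ∈ Zp p) :
    (p : ℚ) ^ e * q ∈ Zp p := by
  obtain ⟨m, n, rfl⟩ := hq
  obtain ⟨k, hk | hk⟩ := e.eq_nat_or_neg
  · subst hk
    refine ⟨m * p ^ k, n, ?_⟩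
    push_cast [zpow_natCast]
    field_simp
  · subst hk
    refine ⟨m, n + k, ?_⟩
    rw [zpow_neg, zpow_natCast]
    push_cast
    field_simp
    rw [pow_add]; ring

lemma zpow_mem {p : ℤ} (hp : (p : ℚ) ≠ 0) (e : ℤ) : (p : ℚ) ^ e ∈ Zp p := by
  simpa using zpow_mul_mem hp e (one_mem p)

lemma sub_mem {p : ℤ} (hp : (p : ℚ) ≠ 0) {q r : ℚ} (hq : q ∈ Zp p) (hr : r ∈ Zp p) :
    q - r ∈ Zp p := by
  simpa [sub_eq_add_neg] using add_mem hp hq (neg_mem hr)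

/-- The underlying type of the semidirect product `ℚ ⋊ ℤ` (with `ℤ` acting by
multiplication by `p`); `f` is the `ℚ`-coordinate and `c` the `ℤ`-coordinate. -/
@[ext] structure QZ (p : ℤ) where
  f : ℚ
  c : ℤ

instance (p : ℤ) [hF : Fact (1 < |p|)] : Group (QZ p) where
  mul x y := ⟨x.f + (p : ℚ) ^ (-x.c) * y.f, x.c + y.c⟩
  one := ⟨0, 0⟩
  inv x := ⟨-((p : ℚ) ^ x.c * x.f), -x.c⟩
  mul_assoc x y z := by
    have hp := cast_ne_zero hF.out
    refine QZ.ext ?_ ?_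
    · show (x.f + (p : ℚ) ^ (-x.c) * y.f) + (p : ℚ) ^ (-(x.c + y.c)) * z.f
        = x.f + (p : ℚ) ^ (-x.c) * (y.f + (p : ℚ) ^ (-y.c) * z.f)
      rw [neg_add, zpow_add₀ hp]
      ring
    · show (x.c + y.c) + z.c = x.c + (y.c + z.c); ring
  one_mul x := by
    refine QZ.ext ?_ ?_
    · show (0 : ℚ) + (p : ℚ) ^ (-(0 : ℤ)) * x.f = x.f
      simp
    · show (0 : ℤ) + x.c = x.c; simp
  mul_one x := by
    refine QZ.ext ?_ ?_
    · show x.f + (p : ℚ) ^ (-x.c) * 0 = x.f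
      simp
    · show x.c + (0 : ℤ) = x.c; simp
  inv_mul_cancel x := by
    have hp := cast_ne_zero hF.out
    refine QZ.ext ?_ ?_
    · show -((p : ℚ) ^ x.c * x.f) + (p : ℚ) ^ (-(-x.c)) * x.f = 0
      rw [neg_neg]
      ring
    · show -x.c + x.c = (0 : ℤ); ring

@[simp] lemma mul_f {p : ℤ} [Fact (1 < |p|)] (x y : QZ p) :
    (x * y).f = x.f + (p : ℚ) ^ (-x.c) * y.f := rfl

@[simp] lemma mul_c {p : ℤ} [Fact (1 < |p|)] (x y : QZ p) : (x * y).c = x.c + y.c := rfl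

@[simp] lemma one_f {p : ℤ} [Fact (1 < |p|)] : (1 : QZ p).f = 0 := rfl
@[simp] lemma one_c {p : ℤ} [Fact (1 < |p|)] : (1 : QZ p).c = 0 := rfl
@[simp] lemma inv_f {p : ℤ} [Fact (1 < |p|)] (x : QZ p) :
    (x⁻¹).f = -((p : ℚ) ^ x.c * x.f) := rfl
@[simp] lemma inv_c {p : ℤ} [Fact (1 < |p|)] (x : QZ p) : (x⁻¹).c = -x.c := rfl

/-- The group `G = ℤ[1/p] ⋊ ℤ`, as a subgroup of `ℚ ⋊ ℤ`. -/
def HZ (p : ℤ) [hF : Fact (1 < |p|)] : Subgroup (QZ p) where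
  carrier := {x | x.f ∈ Zp p}
  mul_mem' {a b} ha hb :=
    add_mem (cast_ne_zero hF.out) ha (zpow_mul_mem (cast_ne_zero hF.out) _ hb)
  one_mem' := zero_mem p
  inv_mem' {a} ha := neg_mem (zpow_mul_mem (cast_ne_zero hF.out) _ ha)

/-- Build an element of `ℤ[1/p] ⋊ ℤ`. -/
def mk {p : ℤ} [Fact (1 < |p|)] (f : ℚ) (c : ℤ) (h : f ∈ Zp p) : HZ p := ⟨⟨f, c⟩, h⟩

/-- The ball of radius `n` in the Cayley graph of a group with generating set `C`. -/
def ball {H : Type*} [Group H] (C : Set H) (n : ℕ) : Set H :=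
  {g | ∃ l : List H, (∀ x ∈ l, x ∈ C) ∧ l.prod = g ∧ l.length ≤ n}

/-- `C` generates the group `H`. -/
def Generates {H : Type*} [Group H] (C : Set H) : Prop :=
  ∀ g : H, ∃ l : List H, (∀ x ∈ l, x ∈ C) ∧ l.prod = g

/-- `C` is symmetric (closed under inverses). -/
def Symm {H : Type*} [Group H] (C : Set H) : Prop := ∀ x ∈ C, x⁻¹ ∈ C

/-- Word length with respect to the generating set `C`. -/
noncomputable def wl {H : Type*} [Group H] (C : Set H) (g : H) : ℕ :=
  sInf {n | g ∈ ball C n}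

/-- `G` is almost convex with respect to `C`: for every `k` there is `N` such that any two
points of `B(n)` at distance at most `k` are joined by a path of length at most `N`
staying inside `B(n)`. -/
def AlmostConvex {H : Type*} [Group H] (C : Set H) : Prop :=
  ∀ k : ℕ, ∃ N : ℕ, ∀ n : ℕ, ∀ g g' : H, g ∈ ball C n → g' ∈ ball C n →
    g⁻¹ * g' ∈ ball C k →
    ∃ l : List H, (∀ x ∈ l, x ∈ C) ∧ l.prod = g⁻¹ * g' ∧ l.length ≤ N ∧
      ∀ m : ℕ, g * (l.take m).prod ∈ ball C n

/-- The least `n` such that `p^n * h` is an integer. -/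
noncomputable def denomExp (p : ℤ) (h : ℚ) : ℕ :=
  sInf {n | ∃ m : ℤ, (p : ℚ) ^ n * h = (m : ℚ)}

/-- `denom h = |p|^n` for the least `n ≥ 0` with `p^n h ∈ ℤ`. -/
noncomputable def denom (p : ℤ) (h : ℚ) : ℚ := (|p| : ℚ) ^ denomExp p h

/-- The relator of the Baumslag–Solitar group `B(1,p)`: here `true` plays the role of
the generator `a` and `false` that of `t`, and the relator is `t⁻¹ a t (a^p)⁻¹`. -/
def bsRels (p : ℤ) : Set (FreeGroup Bool) :=
  {(FreeGroup.of false)⁻¹ * FreeGroup.of true * FreeGroup.of false *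
    (FreeGroup.of true ^ p)⁻¹}

/-- The Baumslag–Solitar group `B(1,p) = ⟨a, t ∣ t⁻¹ a t = a^p⟩`. -/
abbrev BSG (p : ℤ) := PresentedGroup (bsRels p)

/-- The generator `a` of `B(1,p)`. -/
def bsa (p : ℤ) : BSG p := PresentedGroup.of true

/-- The generator `t` of `B(1,p)`. -/
def bst (p : ℤ) : BSG p := PresentedGroup.of false

/-! The word for `(f, 0)` splits in the middle as `a * b⁻¹` with `a`, `b` of length at most
`⌈n/2⌉`; as `a` and `b` have the same `ℤ`-coordinate, `f = a.f - b.f`. Reading a word of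
length `k` from the left, each letter scales the `ℚ`-coordinate of the rest by `p^e` with
`|e| ≤ c`, so `|a.f|` grows at most like `|p|^{kc}` and `p^{kc + D} a.f` is an integer, where
`D` clears the denominators of the generators. -/

section Ball

variable {H : Type*} [Group H] {C : Set H}

lemma list_prod_mem_ball {l : List H} (hl : ∀ x ∈ l, x ∈ C) : l.prod ∈ ball C l.length :=
  ⟨l, hl, rfl, le_rfl⟩

lemma ball_mono {m n : ℕ} (hmn : m ≤ n) : ball C m ⊆ ball C n :=
  fun _ ⟨l, hl, hprod, hlen⟩ => ⟨l, hl, hprod, hlen.trans hmn⟩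

lemma inv_mem_ball (hC : Symm C) {n : ℕ} {g : H} (hg : g ∈ ball C n) : g⁻¹ ∈ ball C n := by
  obtain ⟨l, hl, rfl, hlen⟩ := hg
  refine ⟨(l.map (·⁻¹)).reverse, ?_, (List.prod_inv_reverse l).symm, by simpa using hlen⟩
  simp only [List.mem_reverse, List.mem_map]
  rintro _ ⟨x, hx, rfl⟩
  exact hC x (hl x hx)

lemma exists_eq_mul_inv_of_mem_ball (hC : Symm C) {n : ℕ} {g : H} (hg : g ∈ ball C n) :
    ∃ a ∈ ball C ((n + 1) / 2), ∃ b ∈ ball C ((n + 1) / 2), g = a * b⁻¹ := by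
  obtain ⟨l, hl, rfl, hlen⟩ := hg
  set m := (l.length + 1) / 2
  refine ⟨(l.take m).prod, ?_, (l.drop m).prod⁻¹, ?_, by simp⟩
  · refine ball_mono ?_ (list_prod_mem_ball fun x hx => hl x (List.mem_of_mem_take hx))
    simp only [List.length_take]
    omega
  · refine inv_mem_ball hC (ball_mono ?_
      (list_prod_mem_ball fun x hx => hl x (List.mem_of_mem_drop hx)))
    simp only [List.length_drop]
    omega

end Ball

lemma exists_int_zpow_mul_of_le {p : ℤ} (hp : (p : ℚ) ≠ 0) {a b : ℤ} (hab : a ≤ b) {q : ℚ}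
    (h : ∃ m : ℤ, (p : ℚ) ^ a * q = m) : ∃ m : ℤ, (p : ℚ) ^ b * q = m := by
  obtain ⟨m, hm⟩ := h
  refine ⟨p ^ (b - a).toNat * m, ?_⟩
  have hb : (p : ℚ) ^ b = (p : ℚ) ^ (b - a).toNat * (p : ℚ) ^ a := by
    rw [← zpow_natCast, ← zpow_add₀ hp]; congr 1; omega
  rw [hb, mul_assoc, hm]
  push_cast
  ring

lemma exists_int_pow_denomExp_mul {p : ℤ} {q : ℚ} (hq : q ∈ Zp p) (hp : (p : ℚ) ≠ 0) :
    ∃ m : ℤ, (p : ℚ) ^ denomExp p q * q = m := by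
  obtain ⟨m, n, rfl⟩ := hq
  exact Nat.sInf_mem (s := {n | ∃ m : ℤ, (p : ℚ) ^ n * _ = (m : ℚ)}) ⟨n, m, by field_simp⟩

lemma denom_le_of_exists_int {p : ℤ} (hp : 1 ≤ |p|) {q : ℚ} {K : ℕ}
    (h : ∃ m : ℤ, (p : ℚ) ^ K * q = m) : denom p q ≤ |(p : ℚ)| ^ K := by
  rw [denom, ← Int.cast_abs]
  exact pow_le_pow_right₀ (by exact_mod_cast hp) (Nat.sInf_le h)

lemma pow_mul_half_succ_le_rpow {R : ℝ} (hR : 1 ≤ R) (c n : ℕ) :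
    (R ^ c) ^ ((n + 1) / 2) ≤ R ^ c * R ^ ((n : ℝ) * c / 2) := by
  have hq : (((n + 1) / 2 : ℕ) : ℝ) ≤ ((n : ℝ) + 1) / 2 := by
    rw [le_div_iff₀ two_pos]
    exact_mod_cast Nat.div_mul_le_self (n + 1) 2
  rw [← pow_mul, ← Real.rpow_natCast, ← Real.rpow_natCast, ← Real.rpow_add (by linarith)]
  apply Real.rpow_le_rpow_of_exponent_le hR
  push_cast
  nlinarith [(Nat.cast_nonneg c : (0 : ℝ) ≤ c)]

namespace HZ

variable {p : ℤ} [Fact (1 < |p|)]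

lemma one_lt_abs : 1 < |p| := Fact.out

lemma cast_ne_zero' : (p : ℚ) ≠ 0 := cast_ne_zero one_lt_abs

lemma one_le_abs_cast : (1 : ℚ) ≤ |(p : ℚ)| := by
  rw [← Int.cast_abs]; exact_mod_cast one_lt_abs.le

lemma coe_prod_c_eq_zero {l : List (HZ p)} (hl : ∀ x ∈ l, (x : QZ p).c = 0) :
    (l.prod : QZ p).c = 0 := by
  induction l with
  | nil => rfl
  | cons x l ih =>
    simp only [List.prod_cons, Subgroup.coe_mul, mul_c, hl x List.mem_cons_self, zero_add]
    exact ih fun y hy => hl y (List.mem_cons_of_mem x hy)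

lemma one_le_of_generates {C : Set (HZ p)} (hC : Generates C) {c : ℤ}
    (hc : ∀ g ∈ C, |(g : QZ p).c| ≤ c) : 1 ≤ c := by
  by_contra! hc0
  obtain ⟨l, hl, hprod⟩ := hC (mk 0 1 (zero_mem p))
  have : (l.prod : QZ p).c = 0 :=
    coe_prod_c_eq_zero fun x hx => abs_nonpos_iff.mp ((hc x (hl x hx)).trans (by omega))
  rw [hprod] at this
  exact one_ne_zero this

lemma abs_coe_prod_f_le {F : ℚ} (hF : 0 ≤ F) {c : ℕ} (hB : 2 ≤ |(p : ℚ)| ^ c)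
    {l : List (HZ p)} (hf : ∀ x ∈ l, |(x : QZ p).f| ≤ F) (hc : ∀ x ∈ l, |(x : QZ p).c| ≤ c) :
    |(l.prod : QZ p).f| ≤ F * ((|(p : ℚ)| ^ c) ^ l.length - 1) := by
  induction l with
  | nil => simp
  | cons x l ih =>
    set B := |(p : ℚ)| ^ c
    have ihl := ih (fun y hy => hf y (List.mem_cons_of_mem x hy))
      (fun y hy => hc y (List.mem_cons_of_mem x hy))
    have hx : |(p : ℚ) ^ (-(x : QZ p).c)| ≤ B := by
      rw [abs_zpow, show B = |(p : ℚ)| ^ (c : ℤ) from (zpow_natCast _ _).symm]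
      exact zpow_le_zpow_right₀ one_le_abs_cast
        ((neg_le_abs _).trans (hc x List.mem_cons_self))
    calc |((x :: l).prod : QZ p).f|
        = |(x : QZ p).f + (p : ℚ) ^ (-(x : QZ p).c) * (l.prod : QZ p).f| := rfl
      _ ≤ F + B * (F * (B ^ l.length - 1)) := by
        refine (abs_add_le _ _).trans (add_le_add (hf x List.mem_cons_self) ?_)
        rw [abs_mul]
        exact mul_le_mul hx ihl (abs_nonneg _) (by linarith)
      _ ≤ F * (B ^ (x :: l).length - 1) := by
        rw [List.length_cons, pow_succ]
        nlinarith [mul_nonneg hF (by linarith : (0 : ℚ) ≤ B - 2)]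

lemma exists_int_zpow_mul_coe_prod_f {D c : ℕ} {l : List (HZ p)}
    (hd : ∀ x ∈ l, ∃ m : ℤ, (p : ℚ) ^ D * (x : QZ p).f = m)
    (hc : ∀ x ∈ l, |(x : QZ p).c| ≤ c) {K : ℤ} (hK : l.length * c + D ≤ K) :
    ∃ m : ℤ, (p : ℚ) ^ K * (l.prod : QZ p).f = m := by
  induction l generalizing K with
  | nil => exact ⟨0, by simp⟩
  | cons x l ih =>
    have hxc := abs_le.mp (hc x List.mem_cons_self)
    simp only [List.length_cons] at hK
    push_cast at hK
    obtain ⟨m₁, hm₁⟩ := exists_int_zpow_mul_of_le cast_ne_zero' (a := D) (b := K)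
      (by nlinarith) (by simpa using hd x List.mem_cons_self)
    obtain ⟨m₂, hm₂⟩ := ih (fun y hy => hd y (List.mem_cons_of_mem x hy))
      (fun y hy => hc y (List.mem_cons_of_mem x hy)) (K := K - (x : QZ p).c) (by linarith)
    refine ⟨m₁ + m₂, ?_⟩
    have hsplit : (p : ℚ) ^ K * ((x :: l).prod : QZ p).f
        = (p : ℚ) ^ K * (x : QZ p).f + (p : ℚ) ^ (K - (x : QZ p).c) * (l.prod : QZ p).f := by
      rw [List.prod_cons, Subgroup.coe_mul, mul_f, sub_eq_add_neg, zpow_add₀ cast_ne_zero']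
      ring
    rw [hsplit, hm₁, hm₂]
    push_cast
    rfl

variable {C : Set (HZ p)}

lemma exists_abs_f_le_of_finite (hC : C.Finite) :
    ∃ F : ℚ, 0 ≤ F ∧ ∀ g ∈ C, |(g : QZ p).f| ≤ F := by
  obtain ⟨F, hF⟩ := (hC.image fun g : HZ p => |(g : QZ p).f|).bddAbove
  exact ⟨max F 0, le_max_right _ _, fun g hg => (hF ⟨g, hg, rfl⟩).trans (le_max_left _ _)⟩

lemma exists_int_pow_mul_f_of_finite (hC : C.Finite) :
    ∃ D : ℕ, ∀ g ∈ C, ∃ m : ℤ, (p : ℚ) ^ D * (g : QZ p).f = m := by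
  obtain ⟨D, hD⟩ := (hC.image fun g : HZ p => denomExp p (g : QZ p).f).bddAbove
  refine ⟨D, fun g hg => ?_⟩
  have hle : (denomExp p (g : QZ p).f : ℤ) ≤ D := by exact_mod_cast hD ⟨g, hg, rfl⟩
  simpa using exists_int_zpow_mul_of_le cast_ne_zero' hle
    (by simpa using exists_int_pow_denomExp_mul g.2 cast_ne_zero')

lemma abs_coe_f_le_of_mem_ball {F : ℚ} (hF : 0 ≤ F) {c : ℕ} (hB : 2 ≤ |(p : ℚ)| ^ c)
    (hCf : ∀ x ∈ C, |(x : QZ p).f| ≤ F) (hCc : ∀ x ∈ C, |(x : QZ p).c| ≤ c)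
    {k : ℕ} {g : HZ p} (hg : g ∈ ball C k) : |(g : QZ p).f| ≤ F * (|(p : ℚ)| ^ c) ^ k := by
  obtain ⟨l, hl, rfl, hlen⟩ := hg
  calc |(l.prod : QZ p).f| ≤ F * ((|(p : ℚ)| ^ c) ^ l.length - 1) :=
        abs_coe_prod_f_le hF hB (fun x hx => hCf x (hl x hx)) (fun x hx => hCc x (hl x hx))
    _ ≤ F * (|(p : ℚ)| ^ c) ^ k := by
        gcongr
        exact (sub_le_self _ zero_le_one).trans (pow_le_pow_right₀ (by linarith) hlen)

lemma exists_int_pow_mul_coe_f_of_mem_ball {D c : ℕ}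
    (hCd : ∀ x ∈ C, ∃ m : ℤ, (p : ℚ) ^ D * (x : QZ p).f = m)
    (hCc : ∀ x ∈ C, |(x : QZ p).c| ≤ c) {k : ℕ} {g : HZ p} (hg : g ∈ ball C k) :
    ∃ m : ℤ, (p : ℚ) ^ (k * c + D) * (g : QZ p).f = m := by
  obtain ⟨l, hl, rfl, hlen⟩ := hg
  rw [← zpow_natCast]
  exact exists_int_zpow_mul_coe_prod_f (fun x hx => hCd x (hl x hx))
    (fun x hx => hCc x (hl x hx)) (by push_cast; gcongr)

lemma cast_le_mul_rpow_of_le {v K : ℚ} (hK : 0 ≤ K) {c n : ℕ}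
    (h : v ≤ K * (|(p : ℚ)| ^ c) ^ ((n + 1) / 2)) :
    (v : ℝ) ≤ ((K * |(p : ℚ)| ^ c : ℚ) : ℝ) * |(p : ℝ)| ^ ((n : ℝ) * c / 2) := by
  have hp : (1 : ℝ) ≤ |(p : ℝ)| := by exact_mod_cast one_le_abs_cast (p := p)
  calc (v : ℝ) ≤ K * (|(p : ℝ)| ^ c) ^ ((n + 1) / 2) := by exact_mod_cast h
    _ ≤ K * (|(p : ℝ)| ^ c * |(p : ℝ)| ^ ((n : ℝ) * c / 2)) := by
        gcongr
        exact pow_mul_half_succ_le_rpow hp c n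
    _ = _ := by push_cast; ring

end HZ

open HZ in
theorem lemma_one_simultaneous_general (p : ℤ) [Fact (1 < |p|)] (C : Set (HZ p))
    (hCfin : C.Finite) (hCsym : Symm C) (hCgen : Generates C)
    (c : ℤ) (hcmax : ∀ g ∈ C, |((g : QZ p)).c| ≤ c) :
    ∃ M : ℝ, ∀ n : ℕ, ∀ f : ℚ, ∀ hf : f ∈ Zp p,
      mk f 0 hf ∈ ball C n →
        ((|f| : ℚ) : ℝ) ≤ M * (|p| : ℝ) ^ (((n : ℝ) * (c : ℝ)) / 2) ∧
        ((denom p f : ℚ) : ℝ) ≤ M * (|p| : ℝ) ^ (((n : ℝ) * (c : ℝ)) / 2) := by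
  have hc := one_le_of_generates hCgen hcmax
  lift c to ℕ using by omega
  have hB : 2 ≤ |(p : ℚ)| ^ c := by
    have h2 : (2 : ℚ) ≤ |(p : ℚ)| := by
      rw [← Int.cast_abs]; exact_mod_cast (one_lt_abs : 1 < |p|)
    exact h2.trans (le_self_pow₀ one_le_abs_cast (by omega))
  obtain ⟨F, hF, hCf⟩ := exists_abs_f_le_of_finite hCfin
  obtain ⟨D, hCd⟩ := exists_int_pow_mul_f_of_finite hCfin
  refine ⟨((2 * F + |(p : ℚ)| ^ D) * |(p : ℚ)| ^ c : ℚ), fun n f hf hfn => ?_⟩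
  obtain ⟨a, ha, b, hb, hab⟩ := exists_eq_mul_inv_of_mem_ball hCsym hfn
  have hfab : f = (a : QZ p).f - (b : QZ p).f := by
    have h := congrArg (fun x : HZ p => (x : QZ p).f) (eq_mul_inv_iff_mul_eq.mp hab)
    simp only [mk, Subgroup.coe_mul, mul_f, neg_zero, zpow_zero, one_mul] at h
    linarith
  set q := (n + 1) / 2
  simp only [Int.cast_natCast]
  refine ⟨cast_le_mul_rpow_of_le (by positivity) ?_, cast_le_mul_rpow_of_le (by positivity) ?_⟩
  · have haq := abs_coe_f_le_of_mem_ball hF hB hCf hcmax ha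
    have hbq := abs_coe_f_le_of_mem_ball hF hB hCf hcmax hb
    calc |f| ≤ |(a : QZ p).f| + |(b : QZ p).f| := hfab ▸ abs_sub _ _
      _ ≤ 2 * F * (|(p : ℚ)| ^ c) ^ q := by linarith
      _ ≤ (2 * F + |(p : ℚ)| ^ D) * (|(p : ℚ)| ^ c) ^ q := by gcongr; simp
  · obtain ⟨ma, hma⟩ := exists_int_pow_mul_coe_f_of_mem_ball hCd hcmax ha
    obtain ⟨mb, hmb⟩ := exists_int_pow_mul_coe_f_of_mem_ball hCd hcmax hb
    calc denom p f ≤ |(p : ℚ)| ^ (q * c + D) :=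
          denom_le_of_exists_int one_lt_abs.le
            ⟨ma - mb, by rw [hfab, mul_sub, hma, hmb]; push_cast; ring⟩
      _ = |(p : ℚ)| ^ D * (|(p : ℚ)| ^ c) ^ q := by ring
      _ ≤ (2 * F + |(p : ℚ)| ^ D) * (|(p : ℚ)| ^ c) ^ q := by gcongr; linarith

/-- Lemma 1 (simultaneous bound): there is a constant `M` so that any `(f,0) ∈ B(n)`
satisfies both `|f| ≤ M |p|^{nc/2}` and `denom f ≤ M |p|^{nc/2}`. -/
theorem lemma_one_simultaneous (p : ℤ) [Fact (1 < |p|)] (C : Set (HZ p))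
    (hCfin : C.Finite) (hCsym : Symm C) (hCgen : Generates C)
    (c : ℤ) (hcmax : ∀ g ∈ C, |((g : QZ p)).c| ≤ c) (hcatt : ∃ g ∈ C, |((g : QZ p)).c| = c) :
    ∃ M : ℝ, ∀ n : ℕ, ∀ f : ℚ, ∀ hf : f ∈ Zp p,
      mk f 0 hf ∈ ball C n →
        ((|f| : ℚ) : ℝ) ≤ M * (|p| : ℝ) ^ (((n : ℝ) * (c : ℝ)) / 2) ∧
        ((denom p f : ℚ) : ℝ) ≤ M * (|p| : ℝ) ^ (((n : ℝ) * (c : ℝ)) / 2) :=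
  lemma_one_simultaneous_general p C hCfin hCsym hCgen c hcmax

end BS
end

section
/- There is a constant M (depending only on the finite generating set C) such that for every n, if (f,0) ∈ Z[1/p] ⊂ G lies in the ball B(n), then |f| ≤ M·|p|^{nc/4} or denom(f) ≤ M·|p|^{nc/4}, where c = max{|c_i| : (f_i,c_i) ∈ C}. -/
namespace BS

/-! Write `(f, 0)` as a word `g₀ ⋯ g_{m-1}` with `m ≤ n`, `gᵢ = (fᵢ, cᵢ)`, and let
`sᵢ = c₀ + ⋯ + c_{i-1}` be the heights of its prefixes. Then `f = ∑ p^{-sᵢ} fᵢ`, `s₀ = s_m = 0`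
and `s` is `c`-Lipschitz. If every `sᵢ` is at most `mc/4`, then `p^{D + mc/4} f` is an integer,
where `p^D` clears the denominators of the generators. Otherwise some `s_j > mc/4`; the bounds
`-sᵢ ≤ c·min(i, m - i)` and `-sᵢ ≤ c|i - j| - s_j` make the exponents tent-shaped on either side
of `j`, so `∑ |p|^{-sᵢ}` is at most a constant times `|p|^{mc/2 - s_j} ≤ |p|^{mc/4}`. -/

open Finset

section GeometricSums

variable {P : ℝ}

theorem sum_zpow_le_two_mul_zpow (hP : 2 ≤ P) (T : Finset ℤ) {E : ℤ} (hT : ∀ k ∈ T, k ≤ E) :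
    ∑ k ∈ T, P ^ k ≤ 2 * P ^ E := by
  have hP0 : 0 < P := by linarith
  induction T using Finset.induction_on_max generalizing E with
  | empty => rw [sum_empty]; positivity
  | insert a T hlt ih =>
    rw [sum_insert fun h => (hlt a h).false]
    have hsum : ∑ k ∈ T, P ^ k ≤ 2 * P ^ (a - 1) :=
      ih fun k hk => Int.le_sub_one_of_lt (hlt k hk)
    have hstep : 2 * P ^ (a - 1) ≤ P ^ a :=
      calc 2 * P ^ (a - 1) = P ^ a * (2 / P) := by rw [zpow_sub_one₀ hP0.ne']; ring
        _ ≤ P ^ a := mul_le_of_le_one_right (by positivity) ((div_le_one hP0).mpr hP)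
    calc P ^ a + ∑ k ∈ T, P ^ k ≤ 2 * P ^ a := by linarith
      _ ≤ 2 * P ^ E := by
        gcongr
        · linarith
        · exact hT a (mem_insert_self a T)

theorem sum_zpow_le_of_injOn {ι : Type*} (hP : 2 ≤ P) (S : Finset ι) {e : ι → ℤ}
    (he : Set.InjOn e S) {E : ℤ} (hE : ∀ i ∈ S, e i ≤ E) :
    ∑ i ∈ S, P ^ e i ≤ 2 * P ^ E := by
  classical
  rw [← sum_image he]
  exact sum_zpow_le_two_mul_zpow hP _ (by simpa using hE)

theorem sum_zpow_le_of_le_min (hP : 2 ≤ P) {c : ℕ} (hc : 1 ≤ c) (S : Finset ℕ) {e : ℕ → ℤ}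
    {a b : ℤ} (ha : ∀ i ∈ S, e i ≤ a + c * i) (hb : ∀ i ∈ S, e i ≤ b - c * i) :
    ∑ i ∈ S, P ^ e i ≤ 4 * P ^ ((a + b : ℝ) / 2) := by
  have hP1 : 1 ≤ P := by linarith
  have hc0 : c ≠ 0 := by omega
  -- On each side of the crossing point of `a + c i` and `b - c i` the larger bound has
  -- pairwise distinct exponents, all at most `⌊(a + b) / 2⌋`.
  rw [← sum_filter_add_sum_filter_not S (fun i => 2 * (c * (i : ℕ) : ℤ) ≤ b - a)]
  calc _ ≤ ∑ i ∈ S with 2 * (c * (i : ℕ) : ℤ) ≤ b - a, P ^ (a + c * i)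
        + ∑ i ∈ S with ¬ 2 * (c * (i : ℕ) : ℤ) ≤ b - a, P ^ (b - c * i) := by
        gcongr with i hi i hi
        · exact ha i (mem_filter.mp hi).1
        · exact hb i (mem_filter.mp hi).1
    _ ≤ 2 * P ^ ((a + b) / 2) + 2 * P ^ ((a + b) / 2) := by
        refine add_le_add
          (sum_zpow_le_of_injOn hP _ (fun x _ y _ h => by simpa [hc0] using h) fun i hi => ?_)
          (sum_zpow_le_of_injOn hP _ (fun x _ y _ h => by simpa [hc0] using h) fun i hi => ?_) <;>
        · have := (mem_filter.mp hi).2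
          omega
    _ ≤ 4 * P ^ ((a + b : ℝ) / 2) := by
        have hE : (((a + b) / 2 : ℤ) : ℝ) ≤ (a + b : ℝ) / 2 := by
          have : ((2 * ((a + b) / 2) : ℤ) : ℝ) ≤ ((a + b : ℤ) : ℝ) := by exact_mod_cast (by omega)
          push_cast at this
          linarith
        rw [← Real.rpow_intCast]
        linarith [Real.rpow_le_rpow_of_exponent_le hP1 hE]

theorem abs_sum_range_sub_sum_range_le {d : ℕ → ℤ} {c : ℕ} (hd : ∀ k, |d k| ≤ c) {i i' : ℕ}
    (h : i ≤ i') : |∑ k ∈ range i', d k - ∑ k ∈ range i, d k| ≤ c * ((i' : ℤ) - i) := by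
  obtain ⟨t, rfl⟩ := Nat.exists_eq_add_of_le h
  rw [sum_range_add, add_sub_cancel_left]
  calc _ ≤ ∑ k ∈ range t, |d (i + k)| := abs_sum_le_sum_abs _ _
    _ ≤ ∑ k ∈ range t, (c : ℤ) := sum_le_sum fun k _ => hd _
    _ = c * (((i + t : ℕ) : ℤ) - i) := by simp [mul_comm]

theorem sum_zpow_neg_le_of_lipschitz (hP : 2 ≤ P) {c : ℕ} (hc : 1 ≤ c) {s : ℕ → ℤ}
    (hlip : ∀ i i', i ≤ i' → |s i' - s i| ≤ c * ((i' : ℤ) - i)) {m : ℕ} (hs0 : s 0 = 0)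
    (hsm : s m = 0) {j : ℕ} (hj : j ≤ m) :
    ∑ i ∈ range m, P ^ (-s i) ≤ 8 * P ^ ((m * c : ℝ) / 2 - s j) := by
  have lip {i i' : ℕ} (h : i ≤ i') := abs_le.mp (hlip i i' h)
  obtain ⟨t, rfl⟩ := Nat.exists_eq_add_of_le hj
  have hjt := lip (Nat.le_add_right j t)
  have hj0 := lip (Nat.zero_le j)
  push_cast [hs0, hsm] at hjt hj0
  have sum_left : ∑ i ∈ range j, P ^ (-s i)
      ≤ 4 * P ^ ((((0 : ℤ) : ℝ) + ((c * j - s j : ℤ) : ℝ)) / 2) := by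
    refine sum_zpow_le_of_le_min hP hc _ (fun i hi => ?_) (fun i hi => ?_)
    · have := (lip (Nat.zero_le i)).1
      push_cast [hs0] at this
      linarith
    · linarith [(lip (mem_range.mp hi).le).2]
  have sum_right : ∑ k ∈ range t, P ^ (-s (j + k))
      ≤ 4 * P ^ ((((-s j : ℤ) : ℝ) + ((c * t : ℤ) : ℝ)) / 2) := by
    refine sum_zpow_le_of_le_min hP hc _ (fun k hk => ?_) (fun k hk => ?_)
    · have := (lip (Nat.le_add_right j k)).1
      push_cast at this
      linarith
    · have := (lip (Nat.add_le_add_left (mem_range.mp hk).le j)).2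
      push_cast [hsm] at this
      linarith
  have hsj_le_right : (s j : ℝ) ≤ c * t := by exact_mod_cast (by linarith [hjt.1] : s j ≤ c * t)
  have hsj_le_left : (s j : ℝ) ≤ c * j := by exact_mod_cast (by linarith [hj0.2] : s j ≤ c * j)
  have hP1 : 1 ≤ P := by linarith
  rw [sum_range_add]
  calc _ ≤ _ := add_le_add sum_left sum_right
    _ ≤ 4 * P ^ (((j + t : ℕ) * c : ℝ) / 2 - s j)
        + 4 * P ^ (((j + t : ℕ) * c : ℝ) / 2 - s j) := by
        gcongr <;> · push_cast; linarith
    _ = _ := by ring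

end GeometricSums

theorem exists_seq_of_mem_ball {H : Type*} [Group H] {C : Set H} {n : ℕ} {x : H}
    (hx : x ∈ ball C n) :
    ∃ m ≤ n, ∃ g : ℕ → H, (∀ i, g i ∈ insert 1 C) ∧ ((List.range m).map g).prod = x := by
  obtain ⟨l, hlC, rfl, hln⟩ := hx
  refine ⟨l.length, hln, fun i => l.getD i 1, fun i => ?_, ?_⟩
  · show l.getD i 1 ∈ _
    rw [List.getD_eq_getElem?_getD]
    cases h : l[i]? with
    | none => exact Set.mem_insert 1 C
    | some y => exact Set.mem_insert_of_mem 1 (hlC y (List.mem_of_getElem? h))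
  · congr 1
    apply List.ext_getElem (by simp)
    intro i hi _
    simp_all

section Denominators

variable {p : ℤ}

theorem denomExp_le_of_pow_mul_mem {h : ℚ} {k : ℕ}
    (hk : (p : ℚ) ^ k * h ∈ (Int.castRingHom ℚ).range) : denomExp p h ≤ k := by
  obtain ⟨m, hm⟩ := hk
  exact Nat.sInf_le ⟨m, hm.symm⟩

theorem pow_mul_mem_of_denomExp_le (hp : (p : ℚ) ≠ 0) {h : ℚ} (hh : h ∈ Zp p) {k : ℕ} (hk : denomExp p h ≤ k) :
    (p : ℚ) ^ k * h ∈ (Int.castRingHom ℚ).range := by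
  obtain ⟨m, hm⟩ : ∃ m : ℤ, (p : ℚ) ^ denomExp p h * h = m := by
    obtain ⟨m, n, rfl⟩ := hh
    exact Nat.sInf_mem (s := {n | ∃ m : ℤ, (p : ℚ) ^ n * _ = m}) ⟨n, m, by field_simp⟩
  rw [← Nat.sub_add_cancel hk, pow_add, mul_assoc, hm]
  exact Subring.mul_mem _ (Subring.pow_mem _ (RingHom.mem_range.mpr ⟨p, rfl⟩) _)
    (RingHom.mem_range.mpr ⟨m, rfl⟩)

theorem denomExp_sum_zpow_mul_le (hp : (p : ℚ) ≠ 0) {u : ℕ → ℚ} {s : ℕ → ℤ} {m D K : ℕ}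
    (hu : ∀ i < m, u i ∈ Zp p) (hD : ∀ i < m, denomExp p (u i) ≤ D) (hK : ∀ i < m, s i ≤ K) :
    denomExp p (∑ i ∈ range m, (p : ℚ) ^ (-s i) * u i) ≤ D + K := by
  refine denomExp_le_of_pow_mul_mem ?_
  rw [mul_sum]
  refine Subring.sum_mem _ fun i hi => ?_
  have hi := mem_range.mp hi
  have hexp : (p : ℚ) ^ (D + K) * ((p : ℚ) ^ (-s i) * u i)
      = (p : ℚ) ^ (D + (K - s i).toNat) * u i := by
    rw [← mul_assoc, ← zpow_natCast, ← zpow_natCast, ← zpow_add₀ hp]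
    congr 2
    have := hK i hi
    push_cast
    omega
  rw [hexp]
  exact pow_mul_mem_of_denomExp_le hp (hu i hi) (by have := hD i hi; omega)

end Denominators

section Semidirect

variable {p : ℤ} [Fact (1 < |p|)]

theorem prod_range_map_c (g : ℕ → QZ p) (m : ℕ) :
    ((List.range m).map g).prod.c = ∑ i ∈ range m, (g i).c := by
  induction m with
  | zero => rfl
  | succ m ih => rw [List.prod_range_succ, mul_c, ih, sum_range_succ]

theorem prod_range_map_f (g : ℕ → QZ p) (m : ℕ) :
    ((List.range m).map g).prod.f
      = ∑ i ∈ range m, (p : ℚ) ^ (-∑ k ∈ range i, (g k).c) * (g i).f := by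
  induction m with
  | zero => rfl
  | succ m ih => rw [List.prod_range_succ, mul_f, ih, prod_range_map_c, sum_range_succ]

theorem one_le_of_generates {C : Set (HZ p)} (hC : Generates C) {c : ℤ}
    (hcmax : ∀ g ∈ C, |(g : QZ p).c| ≤ c) : 1 ≤ c := by
  by_contra! hc
  obtain ⟨l, hlC, hl⟩ := hC (mk 0 1 (zero_mem p))
  have : (l.prod : QZ p).c = 0 :=
    List.prod_induction (fun x : HZ p => (x : QZ p).c = 0) (fun a b ha hb => by simp [ha, hb])
      rfl fun x hx => abs_nonpos_iff.mp ((hcmax x (hlC x hx)).trans (by omega))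
  rw [hl] at this
  exact one_ne_zero this

theorem abs_le_or_denom_le_of_prod_eq {c : ℕ} (hc : 1 ≤ c) {F : ℚ} {D : ℕ} {g : ℕ → QZ p}
    (hgf : ∀ i, (g i).f ∈ Zp p) (hgc : ∀ i, |(g i).c| ≤ c) (hgF : ∀ i, |(g i).f| ≤ F)
    (hgD : ∀ i, denomExp p (g i).f ≤ D) {m n : ℕ} (hmn : m ≤ n) {f : ℚ}
    (hprod : ((List.range m).map g).prod = ⟨f, 0⟩) :
    ((|f| : ℚ) : ℝ) ≤ 8 * F * |(p : ℝ)| ^ ((n * c : ℝ) / 4) ∨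
      ((denom p f : ℚ) : ℝ) ≤ |(p : ℝ)| ^ D * |(p : ℝ)| ^ ((n * c : ℝ) / 4) := by
  have hP : (2 : ℝ) ≤ |(p : ℝ)| := by exact_mod_cast (Fact.out : 1 < |p|)
  have hmn' : (m * c : ℝ) ≤ n * c := by gcongr
  set s : ℕ → ℤ := fun i => ∑ k ∈ range i, (g k).c
  have hsm : s m = 0 := by
    show ∑ k ∈ range m, (g k).c = 0
    rw [← prod_range_map_c, hprod]
  have hf : f = ∑ i ∈ range m, (p : ℚ) ^ (-s i) * (g i).f := by rw [← prod_range_map_f, hprod]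
  by_cases hsmall : ∀ i < m, s i ≤ (m * c / 4 : ℕ)
  · right
    have hden := denomExp_sum_zpow_mul_le (cast_ne_zero Fact.out) (fun i _ => hgf i)
      (fun i _ => hgD i) hsmall
    rw [← hf] at hden
    have hK : ((m * c / 4 : ℕ) : ℝ) ≤ (m * c : ℝ) / 4 := by
      rw [le_div_iff₀ (by norm_num)]
      exact_mod_cast Nat.div_mul_le_self (m * c) 4
    calc ((denom p f : ℚ) : ℝ) = |(p : ℝ)| ^ denomExp p f := by simp [denom]
      _ ≤ |(p : ℝ)| ^ (D + m * c / 4) := pow_le_pow_right₀ (by linarith) hden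
      _ ≤ _ := by
        rw [pow_add, ← Real.rpow_natCast _ (m * c / 4)]
        gcongr <;> linarith
  · left
    simp only [not_forall, not_le] at hsmall
    obtain ⟨j, hj, hsj⟩ := hsmall
    have hF : 0 ≤ F := (abs_nonneg _).trans (hgF 0)
    have hsum := sum_zpow_neg_le_of_lipschitz hP hc
      (fun i i' h => abs_sum_range_sub_sum_range_le hgc h) (sum_range_zero _) hsm hj.le
    have habs : |f| ≤ F * ∑ i ∈ range m, |(p : ℚ)| ^ (-s i) := by
      rw [hf, mul_sum]
      refine (abs_sum_le_sum_abs _ _).trans (sum_le_sum fun i _ => ?_)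
      rw [abs_mul, abs_zpow, mul_comm]
      gcongr
      exact hgF i
    have hexp : (m * c : ℝ) / 2 - s j ≤ (n * c : ℝ) / 4 := by
      have : ((m * c : ℕ) : ℝ) < 4 * s j := by exact_mod_cast (by omega : m * c < 4 * s j)
      push_cast at this
      linarith
    calc ((|f| : ℚ) : ℝ) ≤ F * ∑ i ∈ range m, |(p : ℝ)| ^ (-s i) := by
          have := (Rat.cast_le (K := ℝ)).mpr habs
          push_cast at this ⊢
          exact this
      _ ≤ F * (8 * |(p : ℝ)| ^ ((m * c : ℝ) / 2 - s j)) := by gcongr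
      _ ≤ _ := by
        rw [← mul_assoc, mul_comm (F : ℝ)]
        gcongr
        linarith

end Semidirect

theorem lemma_one_disjunction_general (p : ℤ) [Fact (1 < |p|)] (C : Set (HZ p))
    (hCfin : C.Finite) (hCgen : Generates C)
    (c : ℤ) (hcmax : ∀ g ∈ C, |((g : QZ p)).c| ≤ c) :
    ∃ M : ℝ, ∀ n : ℕ, ∀ f : ℚ, ∀ hf : f ∈ Zp p,
      mk f 0 hf ∈ ball C n →
        ((|f| : ℚ) : ℝ) ≤ M * (|p| : ℝ) ^ (((n : ℝ) * (c : ℝ)) / 4) ∨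
        ((denom p f : ℚ) : ℝ) ≤ M * (|p| : ℝ) ^ (((n : ℝ) * (c : ℝ)) / 4) := by
  have hc := one_le_of_generates hCgen hcmax
  lift c to ℕ using by omega
  obtain ⟨F, hF⟩ := ((hCfin.insert 1).image fun g : HZ p => |(g : QZ p).f|).bddAbove
  obtain ⟨D, hD⟩ := ((hCfin.insert 1).image fun g : HZ p => denomExp p (g : QZ p).f).bddAbove
  have hcmax' : ∀ g ∈ insert 1 C, |(g : QZ p).c| ≤ c := by
    rintro g (rfl | hg)
    exacts [by simp, hcmax g hg]
  have hF0 : (0 : ℝ) ≤ F := by exact_mod_cast hF ⟨1, Set.mem_insert 1 C, by simp⟩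
  refine ⟨8 * F + |(p : ℝ)| ^ D, fun n f hf hball => ?_⟩
  obtain ⟨m, hmn, g, hg, hprod⟩ := exists_seq_of_mem_ball hball
  have hprod' : ((List.range m).map fun i => (g i : QZ p)).prod = ⟨f, 0⟩ := by
    have := congrArg Subtype.val hprod
    rwa [Subgroup.val_list_prod, List.map_map] at this
  rw [Int.cast_natCast]
  refine (abs_le_or_denom_le_of_prod_eq (by exact_mod_cast hc) (fun i => (g i).2)
    (fun i => hcmax' _ (hg i)) (fun i => hF ⟨g i, hg i, rfl⟩) (fun i => hD ⟨g i, hg i, rfl⟩)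
    hmn hprod').imp (fun h => h.trans ?_) (fun h => h.trans ?_) <;>
  · gcongr
    linarith [pow_nonneg (abs_nonneg (p : ℝ)) D]

/-- Lemma 1 (first part): there is a constant `M` so that any `(f,0) ∈ B(n)`
satisfies `|f| ≤ M |p|^{nc/4}` or `denom f ≤ M |p|^{nc/4}`. -/
theorem lemma_one_disjunction (p : ℤ) [Fact (1 < |p|)] (C : Set (HZ p))
    (hCfin : C.Finite) (hCsym : Symm C) (hCgen : Generates C)
    (c : ℤ) (hcmax : ∀ g ∈ C, |((g : QZ p)).c| ≤ c) (hcatt : ∃ g ∈ C, |((g : QZ p)).c| = c) :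
    ∃ M : ℝ, ∀ n : ℕ, ∀ f : ℚ, ∀ hf : f ∈ Zp p,
      mk f 0 hf ∈ ball C n →
        ((|f| : ℚ) : ℝ) ≤ M * (|p| : ℝ) ^ (((n : ℝ) * (c : ℝ)) / 4) ∨
        ((denom p f : ℚ) : ℝ) ≤ M * (|p| : ℝ) ^ (((n : ℝ) * (c : ℝ)) / 4) :=
  lemma_one_disjunction_general p C hCfin hCgen c hcmax

end BS
end

section
/- Let h, h' ∈ Z[1/p] ⊂ G = Z[1/p] ⋊ Z with word distance d_C(h, h') ≤ r with respect to a finite generating set C. Then | |h| − |h'| | ≤ M·|p|^{rc/2} and |denom(h) − denom(h')| ≤ M·|p|^{rc/2}, where M and c are the constants of Lemma 1 (c is the maximal |Z-coordinate| of a generator, M depends only on C). -/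
/-!
Left multiplication by `(h, 0)⁻¹` sends `(h', 0)` to `(h' - h, 0)`, so `d_C(h, h') ≤ r` puts
`(h' - h, 0)` in `B(r)`, where Lemma 1 bounds `|h' - h|` and `denom (h' - h)`. The first estimate
is then the reverse triangle inequality. For the second, `denom` is non-archimedean,
`denom (q + q') ≤ max (denom q) (denom q')`, and for nonnegative quantities that already forces
`|denom h - denom h'| ≤ denom (h' - h)`.
-/

namespace BS

lemma exists_pow_denomExp_mul_eq_int {p : ℤ} (hp : (p : ℚ) ≠ 0) {q : ℚ} (hq : q ∈ Zp p) :
    ∃ m : ℤ, (p : ℚ) ^ denomExp p q * q = m := by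
  obtain ⟨m, n, rfl⟩ := hq
  exact Nat.sInf_mem (show {k : ℕ | ∃ m' : ℤ, (p : ℚ) ^ k * (m / p ^ n) = m'}.Nonempty from
    ⟨n, m, by field_simp⟩)

lemma exists_pow_mul_eq_int_of_denomExp_le {p : ℤ} (hp : (p : ℚ) ≠ 0) {q : ℚ}
    (hq : q ∈ Zp p) {k : ℕ} (hk : denomExp p q ≤ k) : ∃ m : ℤ, (p : ℚ) ^ k * q = m := by
  obtain ⟨m, hm⟩ := exists_pow_denomExp_mul_eq_int hp hq
  refine ⟨p ^ (k - denomExp p q) * m, ?_⟩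
  rw [Int.cast_mul, Int.cast_pow, ← hm, ← mul_assoc, ← pow_add, Nat.sub_add_cancel hk]

lemma denomExp_neg (p : ℤ) (q : ℚ) : denomExp p (-q) = denomExp p q := by
  unfold denomExp
  congr 1
  ext n
  constructor <;> rintro ⟨m, hm⟩ <;> exact ⟨-m, by push_cast; linarith⟩

lemma denomExp_add_le {p : ℤ} (hp : (p : ℚ) ≠ 0) {q q' : ℚ} (hq : q ∈ Zp p)
    (hq' : q' ∈ Zp p) : denomExp p (q + q') ≤ max (denomExp p q) (denomExp p q') := by
  obtain ⟨m, hm⟩ := exists_pow_mul_eq_int_of_denomExp_le hp hq (le_max_left _ (denomExp p q'))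
  obtain ⟨m', hm'⟩ :=
    exists_pow_mul_eq_int_of_denomExp_le hp hq' (le_max_right (denomExp p q) _)
  exact Nat.sInf_le ⟨m + m', by rw [mul_add, hm, hm', Int.cast_add]⟩

lemma denom_nonneg (p : ℤ) (q : ℚ) : 0 ≤ denom p q := by
  unfold denom; positivity

lemma denom_neg (p : ℤ) (q : ℚ) : denom p (-q) = denom p q := by
  rw [denom, denom, denomExp_neg]

lemma denom_add_le {p : ℤ} (hp : (p : ℚ) ≠ 0) {q q' : ℚ} (hq : q ∈ Zp p) (hq' : q' ∈ Zp p) :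
    denom p (q + q') ≤ max (denom p q) (denom p q') := by
  have hmono : Monotone ((|p| : ℚ) ^ · : ℕ → ℚ) :=
    pow_right_mono₀ (by exact_mod_cast Int.one_le_abs (by exact_mod_cast hp))
  simpa only [denom, hmono.map_max] using hmono (denomExp_add_le hp hq hq')

lemma abs_sub_le_of_le_max {α : Type*} [AddCommGroup α] [LinearOrder α] [IsOrderedAddMonoid α]
    {a b d : α} (ha : 0 ≤ a) (hb : 0 ≤ b) (hd : 0 ≤ d) (hab : a ≤ max d b)
    (hba : b ≤ max d a) : |a - b| ≤ d := by
  wlog hle : a ≤ b generalizing a b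
  · rw [abs_sub_comm]
    exact this hb ha hba hab (le_of_not_ge hle)
  rw [abs_sub_comm, abs_of_nonneg (sub_nonneg.mpr hle)]
  rcases le_max_iff.mp hba with hbd | hba'
  · exact (sub_le_self b ha).trans hbd
  · rw [le_antisymm hba' hle, sub_self]
    exact hd

lemma abs_denom_sub_denom_le {p : ℤ} (hp : (p : ℚ) ≠ 0) {q q' : ℚ} (hq : q ∈ Zp p)
    (hq' : q' ∈ Zp p) : |denom p q - denom p q'| ≤ denom p (q' - q) := by
  refine abs_sub_le_of_le_max (denom_nonneg p q) (denom_nonneg p q') (denom_nonneg p _) ?_ ?_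
  · have := denom_add_le hp (sub_mem hp hq hq') hq'
    rwa [sub_add_cancel, ← neg_sub q' q, denom_neg] at this
  · simpa only [sub_add_cancel] using denom_add_le hp (sub_mem hp hq' hq) hq

lemma mk_zero_inv_mul_mk {p : ℤ} [Fact (1 < |p|)] {f f' : ℚ} (c : ℤ) (hf : f ∈ Zp p)
    (hf' : f' ∈ Zp p) (hsub : f' - f ∈ Zp p) :
    (mk f 0 hf)⁻¹ * mk f' c hf' = mk (f' - f) c hsub := by
  ext
  · simp [mk, neg_add_eq_sub]
  · simp [mk]

theorem lemma_two_general (p : ℤ) [Fact (1 < |p|)] (C : Set (HZ p))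
    (c : ℤ)
    (M : ℝ)
    (hM : ∀ n : ℕ, ∀ f : ℚ, ∀ hf : f ∈ Zp p,
      mk f 0 hf ∈ ball C n →
        ((|f| : ℚ) : ℝ) ≤ M * (|p| : ℝ) ^ (((n : ℝ) * (c : ℝ)) / 2) ∧
        ((denom p f : ℚ) : ℝ) ≤ M * (|p| : ℝ) ^ (((n : ℝ) * (c : ℝ)) / 2))
    (h h' : ℚ) (hh : h ∈ Zp p) (hh' : h' ∈ Zp p) (r : ℕ)
    (hd : (mk h 0 hh)⁻¹ * mk h' 0 hh' ∈ ball C r) :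
    |((|h| : ℚ) : ℝ) - ((|h'| : ℚ) : ℝ)| ≤ M * (|p| : ℝ) ^ (((r : ℝ) * (c : ℝ)) / 2) ∧
    |((denom p h : ℚ) : ℝ) - ((denom p h' : ℚ) : ℝ)| ≤
      M * (|p| : ℝ) ^ (((r : ℝ) * (c : ℝ)) / 2) := by
  have hp : (p : ℚ) ≠ 0 := cast_ne_zero Fact.out
  have hsub : h' - h ∈ Zp p := sub_mem hp hh' hh
  rw [mk_zero_inv_mul_mk 0 hh hh' hsub] at hd
  obtain ⟨habs, hdenom⟩ := hM r (h' - h) hsub hd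
  constructor
  · refine le_trans ?_ habs
    rw [abs_sub_comm]
    exact_mod_cast abs_abs_sub_abs_le_abs_sub h' h
  · exact le_trans (by exact_mod_cast abs_denom_sub_denom_le hp hh hh') hdenom

/-- Lemma 2: if `h, h' ∈ ℤ[1/p] ⊂ G` and `d_C(h,h') ≤ r`, then
`||h| − |h'|| ≤ M |p|^{rc/2}` and `|denom h − denom h'| ≤ M |p|^{rc/2}`, where `M` is
a constant as in Lemma 1. -/
theorem lemma_two (p : ℤ) [Fact (1 < |p|)] (C : Set (HZ p))
    (hCfin : C.Finite) (hCsym : Symm C) (hCgen : Generates C)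
    (c : ℤ) (hcmax : ∀ g ∈ C, |((g : QZ p)).c| ≤ c)
    (M : ℝ)
    (hM : ∀ n : ℕ, ∀ f : ℚ, ∀ hf : f ∈ Zp p,
      mk f 0 hf ∈ ball C n →
        ((|f| : ℚ) : ℝ) ≤ M * (|p| : ℝ) ^ (((n : ℝ) * (c : ℝ)) / 2) ∧
        ((denom p f : ℚ) : ℝ) ≤ M * (|p| : ℝ) ^ (((n : ℝ) * (c : ℝ)) / 2))
    (h h' : ℚ) (hh : h ∈ Zp p) (hh' : h' ∈ Zp p) (r : ℕ)
    (hd : (mk h 0 hh)⁻¹ * mk h' 0 hh' ∈ ball C r) :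
    |((|h| : ℚ) : ℝ) - ((|h'| : ℚ) : ℝ)| ≤ M * (|p| : ℝ) ^ (((r : ℝ) * (c : ℝ)) / 2) ∧
    |((denom p h : ℚ) : ℝ) - ((denom p h' : ℚ) : ℝ)| ≤
      M * (|p| : ℝ) ^ (((r : ℝ) * (c : ℝ)) / 2) :=
  lemma_two_general p C c M hM h h' hh hh' r hd

end BS
end
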